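/- arXiv:1208.3160 — 3 statements merged into one kernel-verified Lean document; each statement's English description precedes it below -/
import Mathlib

section
/- For every real n×n matrix B there exist subsets S, T of {1,...,n} such that the matrix obtained from B by multiplying each column with index in S by -1 and each row with index in T by -1 (entries at the intersection of a flipped row and flipped column keep their original sign) has all row sums and all column sums nonnegative. -/
/-! Among the finitely many pairs `(S, T)`, take one maximizing the sum of all entries of
`signMat T * B * signMat S`. Flipping row `i` changes that sum by `-2` times the `i`-th row
sum, so at a maximum every row sum is nonnegative; transposing gives the same for columns. -/

open Matrix Finset

/-- Sign-flip diagonal matrix: `-1` on indices in `S`, `1` elsewhere. -/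
noncomputable def signMat {n : ℕ} (S : Finset (Fin n)) : Matrix (Fin n) (Fin n) ℝ :=
  Matrix.diagonal (fun i => if i ∈ S then (-1 : ℝ) else 1)

lemma signMat_mul_signMat {n : ℕ} (S T : Finset (Fin n)) :
    signMat S * signMat T = signMat (symmDiff S T) := by
  rw [signMat, signMat, signMat, diagonal_mul_diagonal]
  congr 1
  ext i
  by_cases hS : i ∈ S <;> by_cases hT : i ∈ T <;> simp [hS, hT, Finset.mem_symmDiff]

lemma signMat_transpose {n : ℕ} (S : Finset (Fin n)) : (signMat S)ᵀ = signMat S :=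
  diagonal_transpose _

lemma transpose_signMat_mul_mul_signMat {n : ℕ} (B : Matrix (Fin n) (Fin n) ℝ)
    (S T : Finset (Fin n)) : (signMat T * B * signMat S)ᵀ = signMat S * Bᵀ * signMat T := by
  rw [transpose_mul, transpose_mul, signMat_transpose, signMat_transpose, Matrix.mul_assoc]

lemma sum_signMat_singleton_mul {n : ℕ} (M : Matrix (Fin n) (Fin n) ℝ) (i₀ : Fin n) :
    ∑ i, ∑ j, (signMat {i₀} * M) i j = ∑ i, ∑ j, M i j - 2 * ∑ j, M i₀ j := by
  have hrow : ∀ i, ∑ j, (signMat {i₀} * M) i j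
      = ∑ j, M i j - if i = i₀ then 2 * ∑ j, M i₀ j else 0 := by
    intro i
    by_cases hi : i = i₀
    · subst hi
      simp only [signMat, diagonal_mul, Finset.mem_singleton, if_true, neg_one_mul,
        Finset.sum_neg_distrib]
      ring
    · simp [signMat, diagonal_mul, hi]
  rw [Finset.sum_congr rfl fun i _ => hrow i, Finset.sum_sub_distrib, Finset.sum_ite_eq']
  simp

lemma rowSum_nonneg_of_forall_le {n : ℕ} (B : Matrix (Fin n) (Fin n) ℝ) (S T : Finset (Fin n))
    (hmax : ∀ T' : Finset (Fin n), ∑ i, ∑ j, (signMat T' * B * signMat S) i j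
      ≤ ∑ i, ∑ j, (signMat T * B * signMat S) i j) (i₀ : Fin n) :
    0 ≤ ∑ j, (signMat T * B * signMat S) i₀ j := by
  have hflip : signMat (symmDiff {i₀} T) * B * signMat S
      = signMat {i₀} * (signMat T * B * signMat S) := by
    rw [← signMat_mul_signMat, Matrix.mul_assoc, Matrix.mul_assoc, Matrix.mul_assoc]
  have hle := hmax (symmDiff {i₀} T)
  rw [hflip, sum_signMat_singleton_mul] at hle
  linarith

theorem exists_flip_nonneg_sums (n : ℕ) (B : Matrix (Fin n) (Fin n) ℝ) :
    ∃ S T : Finset (Fin n),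
      (∀ i, 0 ≤ ∑ j, (signMat T * B * signMat S) i j) ∧
      (∀ j, 0 ≤ ∑ i, (signMat T * B * signMat S) i j) := by
  obtain ⟨⟨S, T⟩, hmax⟩ := Finite.exists_max fun p : Finset (Fin n) × Finset (Fin n) =>
    ∑ i, ∑ j, (signMat p.2 * B * signMat p.1) i j
  refine ⟨S, T, rowSum_nonneg_of_forall_le B S T fun T' => hmax (S, T'), fun j => ?_⟩
  have hcols := rowSum_nonneg_of_forall_le Bᵀ T S fun S' => by
    simpa only [← transpose_signMat_mul_mul_signMat, transpose_apply,
      Finset.sum_comm (γ := Fin n)] using hmax (S', T)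
  simpa only [← transpose_signMat_mul_mul_signMat, transpose_apply] using hcols j
end

section
/- Let the entries of an n×n random matrix B be i.i.d. uniform on [-1,1]. Then the probability that B is invertible and B⁻¹ has all row sums and all column sums positive is at least 2^{-(2n-1)}. -/
/-!
Flipping the signs of rows and columns of `B` (the maps `B ↦ I_S B I_T`) preserves the law of `B`,
and `(I_S B I_T)⁻¹ = I_T B⁻¹ I_S`. For a matrix `A` none of whose signed row or column sums
vanishes, a choice of signs maximising the total sum of `I_T A I_S` makes every row and column
sum of it positive, since flipping one more sign would lower the total by twice that sum.
Almost surely `A = B⁻¹` is such a matrix: each signed sum is a ratio of two determinants by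
Cramer's rule, and the zero set of a nonzero polynomial is null. As `(S, T)` and `(Sᶜ, Tᶜ)` give
the same flip, `2^(2n-1)` flipped copies of the event cover almost everything.
-/

open Finset Matrix MeasureTheory

/-- The uniform probability measure on `[-1, 1]`. -/
noncomputable def unifMeasure : Measure ℝ :=
  (2 : ENNReal)⁻¹ • volume.restrict (Set.Icc (-1 : ℝ) 1)

instance : IsProbabilityMeasure unifMeasure := by
  constructor
  rw [unifMeasure, Measure.smul_apply, Measure.restrict_apply MeasurableSet.univ,
    Set.univ_inter, Real.volume_Icc]
  norm_num
  exact ENNReal.inv_mul_cancel (by norm_num) (by norm_num)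

instance matrixMeasurableSpace (m n : ℕ) : MeasurableSpace (Matrix (Fin m) (Fin n) ℝ) :=
  MeasurableSpace.pi

/-- The law of an `n × n` random matrix with i.i.d. entries uniform on `[-1,1]`. -/
noncomputable def matrixMeasure (n : ℕ) : Measure (Matrix (Fin n) (Fin n) ℝ) :=
  Measure.pi fun _ : Fin n => Measure.pi fun _ : Fin n => unifMeasure

def boolSign (b : Bool) : ℝ := if b then 1 else -1

@[simp] lemma boolSign_true : boolSign true = 1 := rfl

@[simp] lemma boolSign_false : boolSign false = -1 := rfl

lemma boolSign_mul_self (b : Bool) : boolSign b * boolSign b = 1 := by cases b <;> simp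

lemma boolSign_not (b : Bool) : boolSign (!b) = -boolSign b := by cases b <;> simp

lemma boolSign_ne_zero (b : Bool) : boolSign b ≠ 0 := by cases b <;> simp

section SignFlip

variable {m n : Type*} [Fintype m] [Fintype n]

def HasPosLineSums (A : Matrix m n ℝ) : Prop :=
  (∀ i, 0 < ∑ j, A i j) ∧ ∀ j, 0 < ∑ i, A i j

def SignedSumsNeZero (A : Matrix m n ℝ) : Prop :=
  (∀ (δ : n → Bool) (i : m), (A *ᵥ fun j => boolSign (δ j)) i ≠ 0) ∧
    ∀ (ε : m → Bool) (j : n), ((fun i => boolSign (ε i)) ᵥ* A) j ≠ 0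

lemma boolSign_mul_nonneg_of_isMax [DecidableEq m] {w : m → ℝ} {ε : m → Bool}
    (hε : ∀ ε' : m → Bool, (fun i => boolSign (ε' i)) ⬝ᵥ w ≤ (fun i => boolSign (ε i)) ⬝ᵥ w)
    (i : m) : 0 ≤ boolSign (ε i) * w i := by
  have h_flip : (fun k => boolSign (Function.update ε i (!ε i) k))
      = (fun k => boolSign (ε k)) - Pi.single i (2 * boolSign (ε i)) := by
    ext k
    rcases eq_or_ne k i with rfl | hk
    · simp only [Function.update_self, boolSign_not, Pi.sub_apply, Pi.single_eq_same]
      ring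
    · simp [hk]
  have h_le := hε (Function.update ε i (!ε i))
  rw [h_flip, sub_dotProduct, single_dotProduct] at h_le
  linarith

variable [DecidableEq m] [DecidableEq n]

-- The paper's `I_S`, for `S = {i | ε i = false}`.
def signDiag (ε : m → Bool) : Matrix m m ℝ := diagonal fun i => boolSign (ε i)

lemma signDiag_mul_self (ε : m → Bool) : signDiag ε * signDiag ε = 1 := by
  simp [signDiag, diagonal_mul_diagonal, boolSign_mul_self]

lemma inv_signDiag (ε : m → Bool) : (signDiag ε)⁻¹ = signDiag ε :=
  inv_eq_left_inv (signDiag_mul_self ε)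

def signFlip (ε : m → Bool) (δ : n → Bool) (A : Matrix m n ℝ) : Matrix m n ℝ :=
  signDiag ε * A * signDiag δ

lemma signFlip_apply (ε : m → Bool) (δ : n → Bool) (A : Matrix m n ℝ) (i : m) (j : n) :
    signFlip ε δ A i j = boolSign (ε i) * A i j * boolSign (δ j) := by
  simp [signFlip, signDiag, diagonal_mul, mul_diagonal]

lemma signFlip_not_not (ε : m → Bool) (δ : n → Bool) (A : Matrix m n ℝ) :
    signFlip (fun i => !ε i) (fun j => !δ j) A = signFlip ε δ A := by
  ext i j
  simp only [signFlip_apply, boolSign_not]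
  ring

lemma sum_signFlip_row (ε : m → Bool) (δ : n → Bool) (A : Matrix m n ℝ) (i : m) :
    ∑ j, signFlip ε δ A i j = boolSign (ε i) * (A *ᵥ fun j => boolSign (δ j)) i := by
  simp only [signFlip_apply, mulVec, dotProduct, Finset.mul_sum]
  exact Finset.sum_congr rfl fun j _ => by ring

lemma sum_signFlip_col (ε : m → Bool) (δ : n → Bool) (A : Matrix m n ℝ) (j : n) :
    ∑ i, signFlip ε δ A i j = boolSign (δ j) * ((fun i => boolSign (ε i)) ᵥ* A) j := by
  simp only [signFlip_apply, vecMul, dotProduct, Finset.mul_sum]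
  exact Finset.sum_congr rfl fun i _ => by ring

theorem exists_hasPosLineSums_signFlip {A : Matrix m n ℝ} (hA : SignedSumsNeZero A) :
    ∃ ε δ, HasPosLineSums (signFlip ε δ A) := by
  -- The maximised quantity is the sum of all entries of `signFlip p.1 p.2 A`.
  obtain ⟨⟨ε, δ⟩, hmax⟩ := Finite.exists_max fun p : (m → Bool) × (n → Bool) =>
    (fun i => boolSign (p.1 i)) ⬝ᵥ (A *ᵥ fun j => boolSign (p.2 j))
  refine ⟨ε, δ, fun i => ?_, fun j => ?_⟩
  · rw [sum_signFlip_row]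
    exact (boolSign_mul_nonneg_of_isMax (fun ε' => hmax (ε', δ)) i).lt_of_ne'
      (mul_ne_zero (boolSign_ne_zero _) (hA.1 δ i))
  · rw [sum_signFlip_col]
    refine (boolSign_mul_nonneg_of_isMax (fun δ' => ?_) j).lt_of_ne'
      (mul_ne_zero (boolSign_ne_zero _) (hA.2 ε j))
    simpa only [dotProduct_mulVec, dotProduct_comm _ (fun j => boolSign _)] using hmax (ε, δ')

lemma inv_signFlip (ε δ : n → Bool) (B : Matrix n n ℝ) :
    (signFlip ε δ B)⁻¹ = signFlip δ ε B⁻¹ := by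
  simp only [signFlip, Matrix.mul_inv_rev, inv_signDiag, Matrix.mul_assoc]

lemma isUnit_det_signFlip (ε δ : n → Bool) {B : Matrix n n ℝ} (hB : IsUnit B.det) :
    IsUnit (signFlip ε δ B).det := by
  have h_diag (ε : n → Bool) : IsUnit (signDiag ε).det :=
    isUnit_det_of_left_inverse (signDiag_mul_self ε)
  rw [signFlip, det_mul, det_mul]
  exact ((h_diag ε).mul hB).mul (h_diag δ)

theorem exists_signFlip_isUnit_det_hasPosLineSums_inv {B : Matrix n n ℝ} (hdet : IsUnit B.det)
    (hB : SignedSumsNeZero B⁻¹) (i₀ : n) :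
    ∃ ε δ, ε i₀ = true ∧ IsUnit (signFlip ε δ B).det ∧ HasPosLineSums (signFlip ε δ B)⁻¹ := by
  obtain ⟨δ, ε, h⟩ := exists_hasPosLineSums_signFlip hB
  have h_mem (ε δ : n → Bool) (h : HasPosLineSums (signFlip δ ε B⁻¹)) :
      IsUnit (signFlip ε δ B).det ∧ HasPosLineSums (signFlip ε δ B)⁻¹ :=
    ⟨isUnit_det_signFlip ε δ hdet, by rwa [inv_signFlip]⟩
  cases hε : ε i₀
  · exact ⟨fun i => !ε i, fun j => !δ j, by simp [hε], h_mem _ _ (by rwa [signFlip_not_not])⟩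
  · exact ⟨ε, δ, hε, h_mem ε δ h⟩

end SignFlip

instance : NullSingletonClass unifMeasure where
  measure_singleton x := by simp [unifMeasure]

instance (n : ℕ) : IsProbabilityMeasure (matrixMeasure n) :=
  Measure.pi.instIsProbabilityMeasure _

lemma measurePreserving_neg_unifMeasure : MeasurePreserving Neg.neg unifMeasure unifMeasure := by
  have h_vol : MeasurePreserving Neg.neg (volume.restrict (Set.Icc (-1 : ℝ) 1))
      (volume.restrict (Set.Icc (-1 : ℝ) 1)) := by
    simpa [Set.neg_preimage, Set.neg_Icc] using
      (Measure.measurePreserving_neg (volume : Measure ℝ)).restrict_preimage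
        (measurableSet_Icc (a := (-1 : ℝ)) (b := 1))
  refine ⟨h_vol.measurable, ?_⟩
  rw [unifMeasure, Measure.map_smul, h_vol.map_eq]

lemma measurePreserving_boolSign_mul_unifMeasure (b : Bool) :
    MeasurePreserving (boolSign b * ·) unifMeasure unifMeasure := by
  cases b
  · simpa [neg_one_mul] using measurePreserving_neg_unifMeasure
  · simp only [boolSign_true, one_mul]
    exact MeasurePreserving.id unifMeasure

lemma measurePreserving_signFlip {n : ℕ} (ε δ : Fin n → Bool) :
    MeasurePreserving (signFlip ε δ) (matrixMeasure n) (matrixMeasure n) := by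
  have h_entry (i j : Fin n) : MeasurePreserving (fun x => boolSign (ε i) * x * boolSign (δ j))
      unifMeasure unifMeasure := by
    convert (measurePreserving_boolSign_mul_unifMeasure (δ j)).comp
      (measurePreserving_boolSign_mul_unifMeasure (ε i)) using 1
    ext x
    simp only [Function.comp_apply]
    ring
  have h_eq : signFlip ε δ = fun B i j => boolSign (ε i) * B i j * boolSign (δ j) := by
    ext B i j
    exact signFlip_apply ε δ B i j
  rw [h_eq]
  exact measurePreserving_pi _ _ fun i => measurePreserving_pi _ _ fun j => h_entry i j

namespace MvPolynomial

theorem ae_eval_ne_zero_of_fin {m : ℕ} (μ : Fin m → Measure ℝ) [∀ i, SigmaFinite (μ i)]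
    [∀ i, NullSingletonClass (μ i)] {p : MvPolynomial (Fin m) ℝ} (hp : p ≠ 0) :
    ∀ᵐ x ∂Measure.pi μ, eval x p ≠ 0 := by
  induction m with
  | zero =>
    obtain ⟨a, rfl⟩ := C_surjective (Fin 0) p
    exact .of_forall fun x => by simpa using hp
  | succ m ih =>
    set q := finSuccEquiv ℝ m p
    have hq : q ≠ 0 := (map_ne_zero_iff _ (finSuccEquiv ℝ m).injective).mpr hp
    -- Off the null set where the leading coefficient of `q` vanishes, `a ↦ eval (Fin.cons a y) p`
    -- is a nonzero polynomial in `a`, with finitely many roots.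
    have h_slice : ∀ᵐ y ∂Measure.pi fun j => μ (Fin.succAbove 0 j),
        ∀ᵐ a ∂μ 0, eval (Fin.cons a y) p ≠ 0 := by
      filter_upwards [ih _ (Polynomial.leadingCoeff_ne_zero.mpr hq)] with y hy
      have hqy : q.map (eval y) ≠ 0 := fun h => hy <| by
        simpa using congrArg (Polynomial.coeff · q.natDegree) h
      refine measure_mono_null (fun a ha => ?_)
        ((Polynomial.finite_setOfPred_isRoot hqy).measure_zero (μ 0))
      simpa [eval_eq_eval_mv_eval'] using ha
    have h_meas : MeasurableSet {z : ℝ × (Fin m → ℝ) | eval (Fin.cons z.1 z.2) p ≠ 0} :=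
      ((continuous_eval p).comp (continuous_fst.finCons continuous_snd)).measurable
        (measurableSet_singleton 0).compl
    have h_prod :=
      (Measure.ae_prod_iff_ae_ae h_meas).mpr ((Measure.ae_ae_comm h_meas).mpr h_slice)
    filter_upwards [(measurePreserving_piFinSuccAbove μ 0).quasiMeasurePreserving.ae h_prod]
      with x hx
    simpa using hx

theorem ae_eval_ne_zero {ι : Type*} [Fintype ι] (μ : ι → Measure ℝ) [∀ i, SigmaFinite (μ i)]
    [∀ i, NullSingletonClass (μ i)] {p : MvPolynomial ι ℝ} (hp : p ≠ 0) :
    ∀ᵐ x ∂Measure.pi μ, eval x p ≠ 0 := by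
  let e := Fintype.equivFin ι
  have h_fin := ae_eval_ne_zero_of_fin (fun k => μ (e.symm k))
    ((rename_injective e e.injective).ne hp)
  have h_pull :=
    (measurePreserving_piCongrLeft (fun k => μ (e.symm k)) e).quasiMeasurePreserving.ae h_fin
  simp only [Equiv.symm_apply_apply] at h_pull
  filter_upwards [h_pull] with x hx
  have h_comp : (MeasurableEquiv.piCongrLeft (fun _ => ℝ) e x) ∘ e = x :=
    _root_.funext fun i => MeasurableEquiv.piCongrLeft_apply_apply (β := fun _ => ℝ) e x i
  rwa [eval_rename, h_comp] at hx

end MvPolynomial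

lemma measurePreserving_uncurry_matrixMeasure (n : ℕ) :
    MeasurePreserving (MeasurableEquiv.curry (Fin n) (Fin n) ℝ).symm (matrixMeasure n)
      (Measure.pi fun _ : Fin n × Fin n => unifMeasure) := by
  refine ⟨MeasurableEquiv.measurable _, ?_⟩
  simp only [matrixMeasure, ← Measure.infinitePi_eq_pi]
  exact Measure.infinitePi_map_curry_symm fun _ _ => unifMeasure

section Genericity

variable {n : ℕ}

lemma ae_det_map_eval_ne_zero {k : Type*} [Fintype k] [DecidableEq k]
    {M : Matrix k k (MvPolynomial (Fin n × Fin n) ℝ)} (hM : M.det ≠ 0) :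
    ∀ᵐ B : Matrix (Fin n) (Fin n) ℝ ∂matrixMeasure n,
      (M.map (MvPolynomial.eval fun q => B q.1 q.2)).det ≠ 0 := by
  filter_upwards [(measurePreserving_uncurry_matrixMeasure n).quasiMeasurePreserving.ae
    (MvPolynomial.ae_eval_ne_zero _ hM)] with B hB
  rw [← RingHom.mapMatrix_apply, ← RingHom.map_det]
  exact hB

lemma mvPolynomialX_map_eval (B : Matrix (Fin n) (Fin n) ℝ) :
    (mvPolynomialX (Fin n) (Fin n) ℝ).map (MvPolynomial.eval fun q => B q.1 q.2) = B :=
  mvPolynomialX_mapMatrix_eval _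

lemma ae_cramer_map_eval_ne_zero {P : Matrix (Fin n) (Fin n) (MvPolynomial (Fin n × Fin n) ℝ)}
    (hP : P.map (MvPolynomial.eval fun q => (1 : Matrix (Fin n) (Fin n) ℝ) q.1 q.2) = 1)
    {v : Fin n → ℝ} {i : Fin n} (hv : v i ≠ 0) :
    ∀ᵐ B : Matrix (Fin n) (Fin n) ℝ ∂matrixMeasure n,
      cramer (P.map (MvPolynomial.eval fun q => B q.1 q.2)) v i ≠ 0 := by
  have h_map (B : Matrix (Fin n) (Fin n) ℝ) :
      (P.updateCol i fun k => MvPolynomial.C (v k)).map (MvPolynomial.eval fun q => B q.1 q.2)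
        = (P.map (MvPolynomial.eval fun q => B q.1 q.2)).updateCol i v := by
    rw [map_updateCol]
    simp [Function.comp_def]
  have hM : (P.updateCol i fun k => MvPolynomial.C (v k)).det ≠ 0 := by
    intro h
    have h_one := congrArg (MvPolynomial.eval (fun q => (1 : Matrix (Fin n) (Fin n) ℝ) q.1 q.2)) h
    rw [RingHom.map_det, RingHom.mapMatrix_apply, h_map, hP, ← cramer_apply, cramer_one] at h_one
    exact hv (by simpa using h_one)
  filter_upwards [ae_det_map_eval_ne_zero hM] with B hB
  rwa [cramer_apply, ← h_map]

theorem ae_isUnit_det_and_signedSumsNeZero_inv :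
    ∀ᵐ B : Matrix (Fin n) (Fin n) ℝ ∂matrixMeasure n, IsUnit B.det ∧ SignedSumsNeZero B⁻¹ := by
  have h_det : ∀ᵐ B : Matrix (Fin n) (Fin n) ℝ ∂matrixMeasure n, B.det ≠ 0 := by
    simpa only [mvPolynomialX_map_eval] using
      ae_det_map_eval_ne_zero (det_mvPolynomialX_ne_zero (Fin n) ℝ)
  have h_col : ∀ᵐ B : Matrix (Fin n) (Fin n) ℝ ∂matrixMeasure n,
      ∀ (δ : Fin n → Bool) i, cramer B (fun j => boolSign (δ j)) i ≠ 0 := by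
    simp only [ae_all_iff]
    intro δ i
    simpa only [mvPolynomialX_map_eval] using
      ae_cramer_map_eval_ne_zero (mvPolynomialX_map_eval 1) (boolSign_ne_zero (δ i))
  have h_row : ∀ᵐ B : Matrix (Fin n) (Fin n) ℝ ∂matrixMeasure n,
      ∀ (ε : Fin n → Bool) j, cramer Bᵀ (fun i => boolSign (ε i)) j ≠ 0 := by
    simp only [ae_all_iff]
    intro ε j
    simpa only [transpose_map, mvPolynomialX_map_eval] using
      ae_cramer_map_eval_ne_zero (P := (mvPolynomialX (Fin n) (Fin n) ℝ)ᵀ)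
        (by rw [transpose_map, mvPolynomialX_map_eval, transpose_one])
        (boolSign_ne_zero (ε j))
  filter_upwards [h_det, h_col, h_row] with B hdet hcol hrow
  have hB : IsUnit B.det := isUnit_iff_ne_zero.mpr hdet
  refine ⟨hB, fun δ i h => hcol δ i ?_, fun ε j h => hrow ε j ?_⟩
  · rw [← det_smul_inv_mulVec_eq_cramer B _ hB, Pi.smul_apply, h, smul_zero]
  · rw [← det_smul_inv_vecMul_eq_cramer_transpose B _ hB, Pi.smul_apply, h, smul_zero]

end Genericity

theorem measure_univ_le_card_mul_of_ae_exists_mem {α β ι : Type*} [MeasurableSpace α]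
    [MeasurableSpace β] [Fintype ι] {μ : Measure α} {ν : Measure β} {f : ι → α → β}
    (hf : ∀ i, MeasurePreserving (f i) μ ν) {s : Set β} (hs : ∀ᵐ x ∂μ, ∃ i, f i x ∈ s) :
    μ Set.univ ≤ Fintype.card ι * ν s := calc
  μ Set.univ ≤ μ (⋃ i, f i ⁻¹' s) :=
    measure_mono_ae <| by filter_upwards [hs] with x hx _ using Set.mem_iUnion.mpr hx
  _ ≤ ∑ i, μ (f i ⁻¹' s) := measure_iUnion_fintype_le μ _
  _ ≤ ∑ _ : ι, ν s := Finset.sum_le_sum fun i _ => (hf i).measure_preimage_le s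
  _ = Fintype.card ι * ν s := by simp

theorem prob_inv_pos_sums_ge (n : ℕ) :
    (2 : ENNReal)⁻¹ ^ (2 * n - 1) ≤
      matrixMeasure n
        {B | IsUnit B.det ∧ (∀ i, 0 < ∑ j, B⁻¹ i j) ∧ (∀ j, 0 < ∑ i, B⁻¹ i j)} := by
  cases n with
  | zero => simp [Matrix.det_isEmpty]
  | succ m =>
    -- Only row signs with `ε 0 = true` are needed, by `signFlip_not_not`.
    have h_cover : ∀ᵐ B ∂matrixMeasure (m + 1), ∃ p : (Fin m → Bool) × (Fin (m + 1) → Bool),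
        signFlip (Fin.cons true p.1) p.2 B ∈ {B | IsUnit B.det ∧ HasPosLineSums B⁻¹} := by
      filter_upwards [ae_isUnit_det_and_signedSumsNeZero_inv] with B ⟨hdet, hB⟩
      obtain ⟨ε, δ, hε, h_mem⟩ := exists_signFlip_isUnit_det_hasPosLineSums_inv hdet hB 0
      refine ⟨(Fin.tail ε, δ), ?_⟩
      rwa [← hε, Fin.cons_self_tail]
    have h_card : (Fintype.card ((Fin m → Bool) × (Fin (m + 1) → Bool)) : ENNReal)
        = 2 ^ (2 * (m + 1) - 1) := by
      rw [Fintype.card_prod, Fintype.card_fun, Fintype.card_fun, Fintype.card_bool,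
        Fintype.card_fin, Fintype.card_fin, ← pow_add, show m + (m + 1) = 2 * (m + 1) - 1 by omega]
      norm_cast
    have h_le := measure_univ_le_card_mul_of_ae_exists_mem
      (fun p : (Fin m → Bool) × (Fin (m + 1) → Bool) =>
        measurePreserving_signFlip (Fin.cons true p.1) p.2) h_cover
    rw [measure_univ, h_card] at h_le
    rwa [← ENNReal.inv_pow, ENNReal.inv_le_iff_le_mul (by simp) (by simp)]
end

section
/- Under the update p'_{ij} = x_i y_j w_{ij}/w̄ on the Wright manifold with product initial condition, the new genotype distribution is again a rank-one (product) distribution if and only if the matrix (w_{ij}) restricted to the supports of x and y has rank one. -/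
/-!
If `p'` factors as `x' ⊗ y'`, then on the supports `w i j = w̄ (x'ᵢ / xᵢ) (y'ⱼ / yⱼ)`, so the
restricted matrix is a nonzero outer product. Conversely, a rank-one matrix with positive entries
is `|u| ⊗ |v|`; extending `|u|`, `|v|` by zero off the supports gives `xᵢ yⱼ wᵢⱼ = (xᵢ aᵢ)(yⱼ bⱼ)`
for all `i, j`, and normalising the two nonnegative factors yields `x'` and `y'`.
-/

open Finset Matrix

namespace Matrix

variable {K m n : Type*} [Field K] [Fintype n]

theorem rank_eq_zero_iff (A : Matrix m n K) : A.rank = 0 ↔ A = 0 := by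
  refine ⟨fun h => ?_, fun h => h ▸ rank_zero⟩
  rw [rank, Submodule.finrank_eq_zero, LinearMap.range_eq_bot] at h
  classical
  ext i j
  simpa using congrFun (LinearMap.congr_fun h (Pi.single j 1)) i

theorem rank_eq_one_iff (A : Matrix m n K) :
    A.rank = 1 ↔ A ≠ 0 ∧ ∃ u v, A = vecMulVec u v := by
  constructor
  · intro h
    refine ⟨fun h0 => by simp [h0] at h, ?_⟩
    rw [rank, range_mulVecLin] at h
    obtain ⟨u, -, hspan⟩ := finrank_eq_one_iff'.mp h
    choose c hc using fun j => hspan ⟨A.col j, Submodule.subset_span ⟨j, rfl⟩⟩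
    refine ⟨u, c, ext fun i j => ?_⟩
    simpa [vecMulVec_apply, mul_comm] using (congrFun (congrArg Subtype.val (hc j)) i).symm
  · rintro ⟨hA, u, v, rfl⟩
    exact le_antisymm (rank_vecMulVec_le u v)
      (Nat.one_le_iff_ne_zero.mpr ((rank_eq_zero_iff _).not.mpr hA))

end Matrix

section

variable {ι κ : Type*}

theorem exists_pos_of_sum_eq_one [Fintype ι] {x : ι → ℝ} (h : ∑ i, x i = 1) : ∃ i, 0 < x i := by
  obtain ⟨i, -, hi⟩ := exists_lt_of_sum_lt (s := univ) (f := 0) (g := x) (by simp [h])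
  exact ⟨i, hi⟩

theorem exists_nonneg_factors_of_submatrix_eq_vecMulVec {x : ι → ℝ} {y : κ → ℝ}
    (hx : ∀ i, 0 ≤ x i) (hy : ∀ j, 0 ≤ y j) {w : Matrix ι κ ℝ} (hw : ∀ i j, 0 ≤ w i j)
    {u : {i // 0 < x i} → ℝ} {v : {j // 0 < y j} → ℝ}
    (huv : w.submatrix (↑) (↑) = vecMulVec u v) :
    ∃ (a : ι → ℝ) (b : κ → ℝ), (∀ i, 0 ≤ a i) ∧ (∀ j, 0 ≤ b j) ∧
      ∀ i j, x i * y j * w i j = x i * a i * (y j * b j) := by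
  classical
  refine ⟨fun i => if h : 0 < x i then |u ⟨i, h⟩| else 0,
    fun j => if h : 0 < y j then |v ⟨j, h⟩| else 0,
    fun _ => dite_nonneg (fun _ => abs_nonneg _) fun _ => le_rfl,
    fun _ => dite_nonneg (fun _ => abs_nonneg _) fun _ => le_rfl, fun i j => ?_⟩
  rcases (hx i).eq_or_lt with hxi | hxi
  · simp [← hxi]
  rcases (hy j).eq_or_lt with hyj | hyj
  · simp [← hyj]
  have hwij : w i j = |u ⟨i, hxi⟩| * |v ⟨j, hyj⟩| := by
    rw [← abs_mul, ← vecMulVec_apply, ← huv, submatrix_apply, abs_of_nonneg (hw i j)]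
  simp only [hxi, hyj, dif_pos, hwij]
  ring

theorem exists_probability_factors {𝕜 : Type*} [Field 𝕜] [LinearOrder 𝕜] [IsStrictOrderedRing 𝕜]
    [Fintype ι] [Fintype κ] {f : ι → 𝕜} {g : κ → 𝕜} (hf : ∀ i, 0 ≤ f i) (hg : ∀ j, 0 ≤ g j)
    (hfg : (∑ i, f i) * ∑ j, g j ≠ 0) :
    ∃ (x' : ι → 𝕜) (y' : κ → 𝕜), (∀ i, 0 ≤ x' i) ∧ (∑ i, x' i) = 1 ∧ (∀ j, 0 ≤ y' j) ∧
      (∑ j, y' j) = 1 ∧ ∀ i j, f i * g j / ((∑ i, f i) * ∑ j, g j) = x' i * y' j := by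
  obtain ⟨hF, hG⟩ := mul_ne_zero_iff.mp hfg
  exact ⟨fun i => f i / ∑ i, f i, fun j => g j / ∑ j, g j,
    fun i => div_nonneg (hf i) (sum_nonneg fun i _ => hf i), by rw [← sum_div, div_self hF],
    fun j => div_nonneg (hg j) (sum_nonneg fun j _ => hg j), by rw [← sum_div, div_self hG],
    fun i j => (div_mul_div_comm _ _ _ _).symm⟩

end

theorem product_form_iff_rank_one (m n : ℕ)
    (x : Fin m → ℝ) (hx : ∀ i, 0 ≤ x i) (hx1 : ∑ i, x i = 1)
    (y : Fin n → ℝ) (hy : ∀ j, 0 ≤ y j) (hy1 : ∑ j, y j = 1)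
    (w : Matrix (Fin m) (Fin n) ℝ) (hw : ∀ i j, 0 < w i j)
    (wbar : ℝ) (hwbar : wbar = ∑ i, ∑ j, x i * y j * w i j) :
    (∃ (x' : Fin m → ℝ) (y' : Fin n → ℝ),
        (∀ i, 0 ≤ x' i) ∧ (∑ i, x' i) = 1 ∧ (∀ j, 0 ≤ y' j) ∧ (∑ j, y' j) = 1 ∧
        ∀ i j, x i * y j * w i j / wbar = x' i * y' j) ↔
      (w.submatrix (fun i : {i : Fin m // 0 < x i} => (i : Fin m))
        (fun j : {j : Fin n // 0 < y j} => (j : Fin n))).rank = 1 := by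
  obtain ⟨i₀, hi₀⟩ := exists_pos_of_sum_eq_one hx1
  obtain ⟨j₀, hj₀⟩ := exists_pos_of_sum_eq_one hy1
  have hterm i j : 0 ≤ x i * y j * w i j := mul_nonneg (mul_nonneg (hx i) (hy j)) (hw i j).le
  have hwbar₀ : wbar ≠ 0 := hwbar ▸ (sum_pos' (fun i _ => sum_nonneg fun j _ => hterm i j)
    ⟨i₀, mem_univ _, sum_pos' (fun j _ => hterm i₀ j)
      ⟨j₀, mem_univ _, mul_pos (mul_pos hi₀ hj₀) (hw i₀ j₀)⟩⟩).ne'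
  have hW : w.submatrix (↑) (↑) ≠ (0 : Matrix {i // 0 < x i} {j // 0 < y j} ℝ) := fun h =>
    (hw i₀ j₀).ne' (congrFun₂ h ⟨i₀, hi₀⟩ ⟨j₀, hj₀⟩)
  rw [Matrix.rank_eq_one_iff, and_iff_right hW]
  constructor
  · rintro ⟨x', y', -, -, -, -, hfac⟩
    refine ⟨fun i => wbar * x' i / x i, fun j => y' j / y j, ext fun ⟨i, hi⟩ ⟨j, hj⟩ => ?_⟩
    have := (div_eq_iff hwbar₀).mp (hfac i j)
    simp only [submatrix_apply, vecMulVec_apply]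
    field_simp
    linarith
  · rintro ⟨u, v, huv⟩
    obtain ⟨a, b, ha, hb, hab⟩ :=
      exists_nonneg_factors_of_submatrix_eq_vecMulVec hx hy (fun i j => (hw i j).le) huv
    have hwbar_eq : wbar = (∑ i, x i * a i) * ∑ j, y j * b j := by
      simp only [hwbar, sum_mul_sum, hab]
    rw [hwbar_eq] at hwbar₀ ⊢
    simp only [hab]
    exact exists_probability_factors (fun i => mul_nonneg (hx i) (ha i))
      (fun j => mul_nonneg (hy j) (hb j)) hwbar₀
end
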